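/- arXiv:1210.4829 — 7 statements merged into one kernel-verified Lean document; each statement's English description precedes it below -/
import Mathlib

section
/- For every real number a > 0, the limit as n → ∞ of ((n−1)/π) · ∫₁^∞ ((n(r−1)+1)/r^(n+2)) · exp(−((n(r−1)+1)/rⁿ)·a) dr equals (1 − e^(−a))/(π a) + (1/π) · ∫₀¹ exp(−(s − s·log s)·a) ds. (With a = |x|², the quantity on the left is the expected density 𝔻_{pₙ}(x) of critical values of the Gaussian SU(2) random polynomial pₙ, so this is Theorem 1.1 of the paper.) -/
/-!
Substituting `s = r^{-(n-1)}` turns `(n - 1) ∫₁^∞ … dr` into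
`∫₀¹ (n(ρ-1)+1)/ρ² · exp(-a s (n(ρ-1)+1)/ρ) ds` with `ρ = s^{-1/(n-1)}`. As `n → ∞`, `ρ → 1` and
`n(ρ-1) → -log s`, and `log ρ ≤ ρ - 1 ≤ ρ log ρ` bounds the new integrand by `1 - 2 log s`, so
dominated convergence gives the limit `∫₀¹ (1 - log s) exp(-a(s - s log s)) ds`. Since `-log s` is
the derivative of `s - s log s`, which runs from `0` to `1`, the `-log s` part contributes
`(1 - e^{-a})/a`.
-/

open MeasureTheory Real Filter Set Topology

theorem image_inv_pow_Ioi_one {k : ℕ} (hk : k ≠ 0) :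
    (fun r : ℝ => (r ^ k)⁻¹) '' Ioi 1 = Ioo 0 1 := by
  ext s
  constructor
  · rintro ⟨r, hr, rfl⟩
    have hrk : 1 < r ^ k := one_lt_pow₀ hr hk
    exact ⟨by positivity, inv_lt_one_of_one_lt₀ hrk⟩
  · rintro ⟨hs0, hs1⟩
    refine ⟨exp (-log s / k), one_lt_exp_iff.2 ?_, ?_⟩
    · exact div_pos (neg_pos.2 (log_neg hs0 hs1)) (by positivity)
    · show (exp (-log s / k) ^ k)⁻¹ = s
      rw [← exp_nat_mul, mul_div_cancel₀ _ (by exact_mod_cast hk), exp_neg, exp_log hs0, inv_inv]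

theorem injOn_inv_pow_Ioi_one {k : ℕ} (hk : k ≠ 0) :
    InjOn (fun r : ℝ => (r ^ k)⁻¹) (Ioi 1) := fun _ hr _ hr' h =>
  (pow_left_inj₀ (zero_le_one.trans hr.le) (zero_le_one.trans hr'.le) hk).1 (inv_injective h)

theorem hasDerivAt_inv_pow {k : ℕ} {r : ℝ} (hr : 0 < r) :
    HasDerivAt (fun r : ℝ => (r ^ k)⁻¹) (-(k / r ^ (k + 1))) r := by
  refine ((hasDerivAt_pow k r).inv (pow_ne_zero k hr.ne')).congr_deriv ?_
  rcases k with _ | k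
  · simp
  · rw [Nat.add_sub_cancel]
    field_simp
    ring

theorem integral_Ioo_zero_one_eq_integral_Ioi_one {E : Type*} [NormedAddCommGroup E]
    [NormedSpace ℝ E] {k : ℕ} (hk : k ≠ 0) (g : ℝ → E) :
    ∫ s in Ioo (0 : ℝ) 1, g s = ∫ r in Ioi (1 : ℝ), (k / r ^ (k + 1)) • g (r ^ k)⁻¹ := by
  rw [← image_inv_pow_Ioi_one hk, integral_image_eq_integral_abs_deriv_smul measurableSet_Ioi
    (fun r hr => (hasDerivAt_inv_pow (zero_lt_one.trans hr)).hasDerivWithinAt)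
    (injOn_inv_pow_Ioi_one hk)]
  refine setIntegral_congr_fun measurableSet_Ioi fun r hr => ?_
  have : 0 < r := zero_lt_one.trans hr
  simp only [abs_neg, abs_of_nonneg (by positivity : (0:ℝ) ≤ k / r ^ (k + 1))]

noncomputable def densityIntegrand (a : ℝ) (n : ℕ) (r : ℝ) : ℝ :=
  ((n : ℝ) * (r - 1) + 1) / r ^ (n + 2) * exp (-(((n : ℝ) * (r - 1) + 1) / r ^ n) * a)

-- `radius n s = s ^ (-1 / (n - 1))`, the inverse of `r ↦ (r ^ (n - 1))⁻¹` on `(1, ∞)`.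
noncomputable def radius (n : ℕ) (s : ℝ) : ℝ := exp (-log s / ((n : ℝ) - 1))

noncomputable def substitutedIntegrand (a : ℝ) (n : ℕ) (s : ℝ) : ℝ :=
  ((n : ℝ) * (radius n s - 1) + 1) / radius n s ^ 2 *
    exp (-(s * ((n : ℝ) * (radius n s - 1) + 1) / radius n s) * a)

theorem radius_add_one_inv_pow {k : ℕ} (hk : k ≠ 0) {r : ℝ} (hr : 0 < r) :
    radius (k + 1) (r ^ k)⁻¹ = r := by
  have hk' : (k : ℝ) ≠ 0 := by exact_mod_cast hk
  rw [radius, log_inv, log_pow, Nat.cast_succ, add_sub_cancel_right, neg_neg,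
    mul_div_cancel_left₀ _ hk', exp_log hr]

theorem tendsto_radius (s : ℝ) : Tendsto (fun n => radius n s) atTop (𝓝 1) := by
  have h := (tendsto_const_nhds (x := -log s)).div_atTop
    (tendsto_atTop_add_const_right _ (-1) tendsto_natCast_atTop_atTop)
  have h' := (continuous_exp.tendsto 0).comp h
  rw [exp_zero] at h'
  exact h'

theorem tendsto_natCast_mul_log_radius (s : ℝ) :
    Tendsto (fun n => n * log (radius n s)) atTop (𝓝 (-log s)) := by
  have h := (tendsto_natCast_div_add_atTop (-1 : ℝ)).const_mul (-log s)
  rw [mul_one] at h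
  refine h.congr fun n => ?_
  rw [radius, log_exp]
  ring

theorem tendsto_natCast_mul_radius_sub_one (s : ℝ) :
    Tendsto (fun n => n * (radius n s - 1)) atTop (𝓝 (-log s)) := by
  have hupper := (tendsto_radius s).mul (tendsto_natCast_mul_log_radius s)
  rw [one_mul] at hupper
  refine tendsto_of_tendsto_of_tendsto_of_le_of_le (tendsto_natCast_mul_log_radius s) hupper
    (fun n => ?_) (fun n => ?_)
  · exact mul_le_mul_of_nonneg_left (log_le_sub_one_of_pos (exp_pos _)) n.cast_nonneg
  · calc (n : ℝ) * (radius n s - 1) ≤ n * (radius n s * log (radius n s)) :=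
          mul_le_mul_of_nonneg_left (self_sub_one_le_mul_log (exp_pos _).le) n.cast_nonneg
      _ = radius n s * (n * log (radius n s)) := by ring

theorem tendsto_substitutedIntegrand (a s : ℝ) :
    Tendsto (fun n => substitutedIntegrand a n s) atTop
      (𝓝 ((1 - log s) * exp (-(s - s * log s) * a))) := by
  have hq := (tendsto_natCast_mul_radius_sub_one s).add_const 1
  have hρ := tendsto_radius s
  have h : Tendsto (fun n => substitutedIntegrand a n s) atTop
      (𝓝 ((-log s + 1) / 1 ^ 2 * exp (-(s * (-log s + 1) / 1) * a))) :=
    (hq.div (hρ.pow 2) (by norm_num)).mul ((continuous_exp.tendsto _).comp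
      ((((tendsto_const_nhds (x := s)).mul hq).div hρ one_ne_zero).neg.mul_const a))
  convert h using 2
  ring_nf

theorem norm_substitutedIntegrand_le {a : ℝ} (ha : 0 ≤ a) {n : ℕ} (hn : 2 ≤ n) {s : ℝ}
    (hs : s ∈ Ioc 0 1) : ‖substitutedIntegrand a n s‖ ≤ 1 - 2 * log s := by
  obtain ⟨hs0, hs1⟩ := hs
  have hn' : (2 : ℝ) ≤ n := by exact_mod_cast hn
  have hlog_s : 0 ≤ -log s := neg_nonneg.2 (log_nonpos hs0.le hs1)
  set ρ := radius n s
  have hlog_ρ : log ρ = -log s / ((n : ℝ) - 1) := log_exp _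
  have hρ : 1 ≤ ρ := one_le_exp (div_nonneg hlog_s (by linarith))
  have hq : 1 ≤ (n : ℝ) * (ρ - 1) + 1 := by nlinarith
  have hexp : exp (-(s * ((n : ℝ) * (ρ - 1) + 1) / ρ) * a) ≤ 1 := by
    rw [exp_le_one_iff, neg_mul]
    exact neg_nonpos.2 (by positivity)
  have hfrac : (n : ℝ) * (1 - ρ⁻¹) ≤ 2 * -log s :=
    calc (n : ℝ) * (1 - ρ⁻¹) ≤ n * log ρ :=
          mul_le_mul_of_nonneg_left (one_sub_inv_le_log_of_pos (by linarith)) (by linarith)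
      _ = n / ((n : ℝ) - 1) * -log s := by rw [hlog_ρ]; ring
      _ ≤ 2 * -log s := by
          gcongr
          rw [div_le_iff₀ (by linarith)]
          linarith
  rw [Real.norm_of_nonneg (by unfold substitutedIntegrand; positivity)]
  calc substitutedIntegrand a n s ≤ ((n : ℝ) * (ρ - 1) + 1) / ρ ^ 2 * 1 :=
        mul_le_mul_of_nonneg_left hexp (by positivity)
    _ ≤ ((n : ℝ) * (ρ - 1) + 1) / ρ := by
        rw [mul_one]
        exact div_le_div_of_nonneg_left (by positivity) (by positivity)
          (by nlinarith)
    _ = (n : ℝ) * (1 - ρ⁻¹) + ρ⁻¹ := by field_simp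
    _ ≤ 1 - 2 * log s := by linarith [inv_le_one_of_one_le₀ hρ]

theorem natCast_sub_one_mul_integral_densityIntegrand (a : ℝ) {n : ℕ} (hn : 2 ≤ n) :
    ((n : ℝ) - 1) * ∫ r in Ioi (1 : ℝ), densityIntegrand a n r =
      ∫ s in (0 : ℝ)..1, substitutedIntegrand a n s := by
  obtain ⟨k, hk, rfl⟩ : ∃ k, k ≠ 0 ∧ n = k + 1 := ⟨n - 1, by omega, by omega⟩
  rw [intervalIntegral.integral_of_le zero_le_one, integral_Ioc_eq_integral_Ioo,
    integral_Ioo_zero_one_eq_integral_Ioi_one hk, ← integral_const_mul]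
  refine setIntegral_congr_fun measurableSet_Ioi fun r hr => ?_
  have hr0 : 0 < r := zero_lt_one.trans hr
  have hexp : (r ^ k)⁻¹ * (((k : ℝ) + 1) * (r - 1) + 1) / r =
      (((k : ℝ) + 1) * (r - 1) + 1) / r ^ (k + 1) := by
    field_simp
    ring
  simp only [substitutedIntegrand, densityIntegrand, radius_add_one_inv_pow hk hr0,
    smul_eq_mul, Nat.cast_add_one, add_sub_cancel_right]
  rw [hexp]
  field_simp
  ring

theorem tendsto_integral_substitutedIntegrand {a : ℝ} (ha : 0 ≤ a) :
    Tendsto (fun n => ∫ s in (0 : ℝ)..1, substitutedIntegrand a n s) atTop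
      (𝓝 (∫ s in (0 : ℝ)..1, (1 - log s) * exp (-(s - s * log s) * a))) := by
  refine intervalIntegral.tendsto_integral_filter_of_dominated_convergence
    (fun s => 1 - 2 * log s) (.of_forall fun n => ?_) ?_ ?_ (.of_forall fun s _ => ?_)
  · unfold substitutedIntegrand radius
    fun_prop
  · filter_upwards [eventually_ge_atTop 2] with n hn
    refine .of_forall fun s hs => norm_substitutedIntegrand_le ha hn ?_
    rwa [uIoc_of_le zero_le_one] at hs
  · exact intervalIntegrable_const.sub (intervalIntegral.intervalIntegrable_log'.const_mul 2)
  · exact tendsto_substitutedIntegrand a s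

theorem integral_one_sub_log_mul_exp {a : ℝ} (ha : a ≠ 0) :
    ∫ s in (0 : ℝ)..1, (1 - log s) * exp (-(s - s * log s) * a) =
      (1 - exp (-a)) / a + ∫ s in (0 : ℝ)..1, exp (-(s - s * log s) * a) := by
  have hcont : Continuous fun s => exp (-(s - s * log s) * a) := by
    have := continuous_mul_log
    fun_prop
  have hderiv : ∀ s ∈ Ioo (0 : ℝ) 1, HasDerivAt (fun s => exp (-(s - s * log s) * a) / a)
      (log s * exp (-(s - s * log s) * a)) s := fun s hs => by
    have hg := ((hasDerivAt_id' s).fun_sub (hasDerivAt_mul_log hs.1.ne')).fun_neg.mul_const a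
    refine (hg.exp.div_const a).congr_deriv ?_
    field_simp
    ring
  have hlog : IntervalIntegrable (fun s => log s * exp (-(s - s * log s) * a)) volume 0 1 :=
    intervalIntegral.intervalIntegrable_log'.mul_continuousOn hcont.continuousOn
  have hftc := intervalIntegral.integral_eq_sub_of_hasDerivAt_of_le zero_le_one
    (hcont.div_const a).continuousOn hderiv hlog
  simp only [sub_mul, one_mul]
  rw [intervalIntegral.integral_sub (hcont.intervalIntegrable 0 1) hlog, hftc]
  simp only [log_one, log_zero, mul_zero, sub_zero, sub_self, neg_zero, zero_mul, neg_one_mul,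
    exp_zero]
  ring

/-- Theorem 1.1: for every `a > 0` (thinking of `a = |x|²`), the expected density
`𝔻_{pₙ} = ((n−1)/π) ∫₁^∞ ((n(r−1)+1)/r^(n+2)) e^{−((n(r−1)+1)/rⁿ) a} dr`
converges, as `n → ∞`, to `(1 − e^{−a})/(π a) + (1/π) ∫₀¹ e^{−(s − s log s) a} ds`. -/
theorem su2_critical_values_density_limit (a : ℝ) (ha : 0 < a) :
    Tendsto
      (fun n : ℕ =>
        (((n : ℝ) - 1) / π) *
          ∫ r in Ioi (1 : ℝ),
            (((n : ℝ) * (r - 1) + 1) / r ^ (n + 2)) *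
              Real.exp (-(((n : ℝ) * (r - 1) + 1) / r ^ n) * a))
      atTop
      (nhds ((1 - Real.exp (-a)) / (π * a)
        + (1 / π) * ∫ s in (0:ℝ)..1, Real.exp (-(s - s * Real.log s) * a))) := by
  have hlimit := (tendsto_integral_substitutedIntegrand ha.le).const_mul (1 / π)
  rw [integral_one_sub_log_mul_exp ha.ne'] at hlimit
  convert hlimit.congr' ?_ using 2
  · field_simp
  · filter_upwards [eventually_ge_atTop 2] with n hn
    rw [← natCast_sub_one_mul_integral_densityIntegrand a hn]
    simp only [densityIntegrand]
    ring
end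

section
/- Let n ≥ 2 be an integer and a ≥ 0 a real number. Then ∫₁^∞ ( (n²−n)·rⁿ·(r−1)²·a + 2·r^(2n) ) / r^(3n+2) · exp(−((n(r−1)+1)/rⁿ)·a) dr = ∫₁^∞ ((n(r−1)+1)/r^(n+2)) · exp(−((n(r−1)+1)/rⁿ)·a) dr. -/
/-!
The difference of the two integrands is the derivative of
`F r = (r - 1) / r ^ (n + 1) * exp (-q r * a)` with `q r = (n * (r - 1) + 1) / r ^ n`,
and `F` vanishes at `r = 1` and, for `n ≥ 1`, at infinity, so the identity is an integration
by parts. Bernoulli's inequality `1 + n * (r - 1) ≤ r ^ n` gives `0 ≤ q ≤ 1` on `[1, ∞)`, so the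
exponential factor is at most `exp |a|` and both integrands are `O(r⁻²)`.
-/

open MeasureTheory Real Set Filter Topology

theorem integrableOn_Ioi_one_of_abs_le_div_sq {f : ℝ → ℝ}
    (hf : AEStronglyMeasurable f (volume.restrict (Ioi 1))) (C : ℝ)
    (hle : ∀ r, 1 < r → |f r| ≤ C / r ^ 2) : IntegrableOn f (Ioi 1) := by
  refine ((integrableOn_Ioi_rpow_of_lt (by norm_num : (-2 : ℝ) < -1) one_pos).const_mul C).mono'
    hf ?_
  filter_upwards [ae_restrict_mem measurableSet_Ioi] with r hr
  rw [Real.norm_eq_abs, rpow_neg (zero_le_one.trans hr.out.le), rpow_two, ← div_eq_mul_inv]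
  exact hle r hr

namespace SU2

noncomputable section

def bernoulliRatio (n : ℕ) (r : ℝ) : ℝ := (n * (r - 1) + 1) / r ^ n

def twoTermIntegrand (n : ℕ) (a r : ℝ) : ℝ :=
  (((n : ℝ) ^ 2 - n) * r ^ n * (r - 1) ^ 2 * a + 2 * r ^ (2 * n)) / r ^ (3 * n + 2) *
    exp (-bernoulliRatio n r * a)

def oneTermIntegrand (n : ℕ) (a r : ℝ) : ℝ :=
  (n * (r - 1) + 1) / r ^ (n + 2) * exp (-bernoulliRatio n r * a)

def primitive (n : ℕ) (a r : ℝ) : ℝ :=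
  (r - 1) / r ^ (n + 1) * exp (-bernoulliRatio n r * a)

end

variable {n : ℕ} {a r : ℝ}

lemma bernoulliRatio_nonneg (hr : 1 ≤ r) : 0 ≤ bernoulliRatio n r := by
  have : 0 ≤ r - 1 := by linarith
  exact div_nonneg (by positivity) (pow_nonneg (by linarith) n)

lemma bernoulliRatio_le_one (hr : 1 ≤ r) : bernoulliRatio n r ≤ 1 := by
  rw [bernoulliRatio, div_le_one (pow_pos (zero_lt_one.trans_le hr) n)]
  simpa [add_comm] using one_add_mul_le_pow (by linarith : (-2 : ℝ) ≤ r - 1) n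

lemma exp_neg_bernoulliRatio_mul_le (hr : 1 ≤ r) :
    exp (-bernoulliRatio n r * a) ≤ exp |a| := by
  refine exp_le_exp.2 ((le_abs_self _).trans ?_)
  rw [abs_mul, abs_neg, abs_of_nonneg (bernoulliRatio_nonneg hr)]
  exact mul_le_of_le_one_left (abs_nonneg a) (bernoulliRatio_le_one hr)

lemma hasDerivAt_bernoulliRatio (hr : r ≠ 0) :
    HasDerivAt (bernoulliRatio n) (-(((n : ℝ) ^ 2 - n) * (r - 1) / r ^ (n + 1))) r := by
  have hnum : HasDerivAt (fun r : ℝ => n * (r - 1) + 1) n r := by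
    simpa using (((hasDerivAt_id r).sub_const 1).const_mul (n : ℝ)).add_const 1
  refine (hnum.div (hasDerivAt_pow n r) (pow_ne_zero n hr)).congr_deriv ?_
  -- `hasDerivAt_pow` yields `r ^ (n - 1)` with truncated subtraction
  rcases n with _ | k
  · simp
  · field_simp
    push_cast
    ring

lemma hasDerivAt_primitive (hr : r ≠ 0) :
    HasDerivAt (primitive n a) (twoTermIntegrand n a r - oneTermIntegrand n a r) r := by
  have hfactor : HasDerivAt (fun r : ℝ => (r - 1) / r ^ (n + 1))
      ((1 * r ^ (n + 1) - (r - 1) * ((n + 1 : ℕ) * r ^ n)) / (r ^ (n + 1)) ^ 2) r :=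
    ((hasDerivAt_id r).sub_const 1).div (hasDerivAt_pow (n + 1) r) (pow_ne_zero _ hr)
  refine (hfactor.mul ((hasDerivAt_bernoulliRatio hr).neg.mul_const a).exp).congr_deriv ?_
  simp only [twoTermIntegrand, oneTermIntegrand, Pi.neg_apply]
  field_simp
  push_cast
  ring

lemma abs_mul_exp_neg_bernoulliRatio_le (x : ℝ) (hr : 1 ≤ r) :
    |x * exp (-bernoulliRatio n r * a)| ≤ |x| * exp |a| := by
  rw [abs_mul, abs_of_pos (exp_pos _)]
  exact mul_le_mul_of_nonneg_left (exp_neg_bernoulliRatio_mul_le hr) (abs_nonneg x)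

lemma abs_oneTermIntegrand_le (hr : 1 ≤ r) : |oneTermIntegrand n a r| ≤ exp |a| / r ^ 2 := by
  have hr0 : 0 < r := zero_lt_one.trans_le hr
  have hratio : (n * (r - 1) + 1) / r ^ (n + 2) = bernoulliRatio n r / r ^ 2 := by
    rw [bernoulliRatio, pow_add, div_div]
  refine (abs_mul_exp_neg_bernoulliRatio_le _ hr).trans ?_
  rw [hratio, abs_of_nonneg (div_nonneg (bernoulliRatio_nonneg hr) (sq_nonneg r)),
    div_mul_eq_mul_div]
  gcongr
  exact mul_le_of_le_one_left (exp_pos _).le (bernoulliRatio_le_one hr)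

lemma abs_twoTermIntegrand_le (hn : 1 ≤ n) (hr : 1 ≤ r) :
    |twoTermIntegrand n a r| ≤ ((n ^ 2 - n) * |a| + 2) * exp |a| / r ^ 2 := by
  have hr0 : 0 < r := zero_lt_one.trans_le hr
  have hcoeff : (0 : ℝ) ≤ n ^ 2 - n := by
    have : (1 : ℝ) ≤ n := by exact_mod_cast hn
    nlinarith
  have hquad : r ^ n * (r - 1) ^ 2 ≤ r ^ (3 * n) :=
    calc r ^ n * (r - 1) ^ 2 ≤ r ^ n * r ^ 2 := by gcongr; linarith
      _ = r ^ (n + 2) := (pow_add r n 2).symm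
      _ ≤ r ^ (3 * n) := pow_le_pow_right₀ hr (by omega)
  have hnum : |((n : ℝ) ^ 2 - n) * r ^ n * (r - 1) ^ 2 * a + 2 * r ^ (2 * n)|
      ≤ ((n ^ 2 - n) * |a| + 2) * r ^ (3 * n) :=
    calc _ ≤ |((n : ℝ) ^ 2 - n) * r ^ n * (r - 1) ^ 2 * a| + |2 * r ^ (2 * n)| := abs_add_le _ _
      _ = (n ^ 2 - n) * (r ^ n * (r - 1) ^ 2) * |a| + 2 * r ^ (2 * n) := by
          rw [abs_mul, abs_of_nonneg (mul_nonneg (mul_nonneg hcoeff (by positivity)) (sq_nonneg _)),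
            abs_of_nonneg (by positivity : (0 : ℝ) ≤ 2 * r ^ (2 * n))]
          ring
      _ ≤ (n ^ 2 - n) * r ^ (3 * n) * |a| + 2 * r ^ (3 * n) := by
          gcongr
          norm_num
      _ = _ := by ring
  have hfrac : |(((n : ℝ) ^ 2 - n) * r ^ n * (r - 1) ^ 2 * a + 2 * r ^ (2 * n)) / r ^ (3 * n + 2)|
      ≤ ((n ^ 2 - n) * |a| + 2) / r ^ 2 := by
    rw [abs_div, abs_of_pos (pow_pos hr0 _), div_le_div_iff₀ (pow_pos hr0 _) (pow_pos hr0 _),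
      pow_add, ← mul_assoc]
    gcongr
  calc _ ≤ _ := abs_mul_exp_neg_bernoulliRatio_le _ hr
    _ ≤ ((n ^ 2 - n) * |a| + 2) / r ^ 2 * exp |a| := by gcongr
    _ = _ := div_mul_eq_mul_div _ _ _

lemma abs_primitive_le (hn : 1 ≤ n) (hr : 1 ≤ r) : |primitive n a r| ≤ exp |a| / r := by
  have hr0 : 0 < r := zero_lt_one.trans_le hr
  have hfrac : |(r - 1) / r ^ (n + 1)| ≤ 1 / r := by
    rw [abs_of_nonneg (div_nonneg (by linarith) (pow_pos hr0 _).le),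
      div_le_div_iff₀ (pow_pos hr0 _) hr0]
    calc (r - 1) * r ≤ r * r := by gcongr; linarith
      _ = r ^ 2 := (sq r).symm
      _ ≤ 1 * r ^ (n + 1) := by rw [one_mul]; exact pow_le_pow_right₀ hr (by omega)
  calc _ ≤ _ := abs_mul_exp_neg_bernoulliRatio_le _ hr
    _ ≤ 1 / r * exp |a| := by gcongr
    _ = _ := by rw [one_div_mul_eq_div]

variable (n a) in
lemma integrableOn_oneTermIntegrand :
    IntegrableOn (oneTermIntegrand n a) (Ioi 1) :=
  integrableOn_Ioi_one_of_abs_le_div_sq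
    (by unfold oneTermIntegrand bernoulliRatio; fun_prop : Measurable _).aestronglyMeasurable _
    fun _ hr => abs_oneTermIntegrand_le hr.le

variable (a) in
lemma integrableOn_twoTermIntegrand (hn : 1 ≤ n) :
    IntegrableOn (twoTermIntegrand n a) (Ioi 1) :=
  integrableOn_Ioi_one_of_abs_le_div_sq
    (by unfold twoTermIntegrand bernoulliRatio; fun_prop : Measurable _).aestronglyMeasurable _
    fun _ hr => abs_twoTermIntegrand_le hn hr.le

variable (a) in
lemma tendsto_primitive_atTop (hn : 1 ≤ n) :
    Tendsto (primitive n a) atTop (𝓝 0) :=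
  squeeze_zero_norm' ((eventually_ge_atTop 1).mono fun _ hr => abs_primitive_le hn hr)
    (tendsto_const_nhds.div_atTop tendsto_id)

lemma primitive_one : primitive n a 1 = 0 := by simp [primitive]

end SU2

open SU2 in
theorem su2_two_term_integral_eq_one_term_general (n : ℕ) (hn : 2 ≤ n) (a : ℝ) :
    ∫ r in Ioi (1 : ℝ),
        ((((n : ℝ) ^ 2 - n) * r ^ n * (r - 1) ^ 2 * a + 2 * r ^ (2 * n)) / r ^ (3 * n + 2)) *
          Real.exp (-(((n : ℝ) * (r - 1) + 1) / r ^ n) * a)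
    = ∫ r in Ioi (1 : ℝ),
        (((n : ℝ) * (r - 1) + 1) / r ^ (n + 2)) *
          Real.exp (-(((n : ℝ) * (r - 1) + 1) / r ^ n) * a) := by
  have hn1 : 1 ≤ n := by omega
  have h1 := integrableOn_twoTermIntegrand a hn1
  have h2 := integrableOn_oneTermIntegrand n a
  have hFTC := integral_Ioi_of_hasDerivAt_of_tendsto'
    (fun r hr => hasDerivAt_primitive (zero_lt_one.trans_le hr).ne') (h1.sub h2)
    (tendsto_primitive_atTop a hn1)
  rw [integral_sub h1 h2, primitive_one, sub_zero, sub_eq_zero] at hFTC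
  exact hFTC

/-- The integration-by-parts simplification in the proof of Proposition 3.1:
the two-term integral (ttttt) equals the single-term integral (dpn). -/
theorem su2_two_term_integral_eq_one_term (n : ℕ) (hn : 2 ≤ n) (a : ℝ) (ha : 0 ≤ a) :
    ∫ r in Ioi (1 : ℝ),
        ((((n : ℝ) ^ 2 - n) * r ^ n * (r - 1) ^ 2 * a + 2 * r ^ (2 * n)) / r ^ (3 * n + 2)) *
          Real.exp (-(((n : ℝ) * (r - 1) + 1) / r ^ n) * a)
    = ∫ r in Ioi (1 : ℝ),
        (((n : ℝ) * (r - 1) + 1) / r ^ (n + 2)) *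
          Real.exp (-(((n : ℝ) * (r - 1) + 1) / r ^ n) * a) :=
  su2_two_term_integral_eq_one_term_general n hn a
end

section
/- Let n ≥ 2 be an integer and a ≥ 0 a real number. Then ∫₁^∞ (n²−n)·(r−1)²·a·r^(−(2n+2)) · exp(−((n(r−1)+1)/rⁿ)·a) dr = ∫₁^∞ ( n·r^(−(n+1)) − (n+1)·r^(−(n+2)) ) · exp(−((n(r−1)+1)/rⁿ)·a) dr. -/
open MeasureTheory Real Set Filter Topology

/-!
With `φ(r) = (n(r-1)+1)/rⁿ` one has `φ' = -(n²-n)(r-1) r^{-(n+1)}`, so the primitive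
`F(r) = (r-1) r^{-(n+1)} e^{-φ(r) a}` has derivative "left integrand − right integrand".
`F` vanishes at `r = 1` and at `∞`, and both integrands are integrable on `(1, ∞)`:
by Bernoulli's inequality `0 ≤ φ ≤ 1` on `[1, ∞)`, so the exponential factor is bounded
by `e^{|a|}`, while the rational factors decay at least like `r⁻²`.
-/

theorem integrableOn_Ioi_zpow_of_lt {k : ℤ} (hk : k < -1) {c : ℝ} (hc : 0 < c) :
    IntegrableOn (fun x : ℝ => x ^ k) (Ioi c) :=
  (integrableOn_Ioi_rpow_of_lt (by exact_mod_cast hk) hc).congr_fun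
    (fun x _ => rpow_intCast x k) measurableSet_Ioi

theorem integrableOn_Ioi_sub_one_sq_mul_zpow {k : ℤ} (hk : k < -3) {c : ℝ} (hc : 0 < c) :
    IntegrableOn (fun x : ℝ => (x - 1) ^ 2 * x ^ k) (Ioi c) := by
  have hint : ∀ j ≤ k + 2, IntegrableOn (fun x : ℝ => x ^ j) (Ioi c) :=
    fun j hj => integrableOn_Ioi_zpow_of_lt (by omega) hc
  refine (((hint (k + 2) le_rfl).sub ((hint (k + 1) (by omega)).const_mul 2)).add
    (hint k (by omega))).congr_fun (fun x hx => ?_) measurableSet_Ioi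
  have hx : x ≠ 0 := (hc.trans hx).ne'
  simp only [Pi.add_apply, Pi.sub_apply, zpow_add₀ hx, zpow_one, zpow_two]
  ring

namespace FirstTermIBP

variable (n : ℕ) (a : ℝ)

noncomputable def expFactor (r : ℝ) : ℝ := exp (-(((n : ℝ) * (r - 1) + 1) / r ^ n) * a)

noncomputable def leftIntegrand (r : ℝ) : ℝ :=
  ((n : ℝ) ^ 2 - n) * (r - 1) ^ 2 * a * r ^ (-(2 * (n : ℤ) + 2)) * expFactor n a r

noncomputable def rightIntegrand (r : ℝ) : ℝ :=
  ((n : ℝ) * r ^ (-((n : ℤ) + 1)) - ((n : ℝ) + 1) * r ^ (-((n : ℤ) + 2))) * expFactor n a r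

noncomputable def primitive (r : ℝ) : ℝ := (r - 1) * r ^ (-((n : ℤ) + 1)) * expFactor n a r

theorem ratio_mem_Icc {r : ℝ} (hr : 1 ≤ r) :
    ((n : ℝ) * (r - 1) + 1) / r ^ n ∈ Icc 0 1 := by
  have hpow : 0 < r ^ n := pow_pos (by linarith) n
  have hnum : 0 ≤ (n : ℝ) * (r - 1) + 1 := by
    have := mul_nonneg n.cast_nonneg (sub_nonneg.2 hr)
    linarith
  refine ⟨div_nonneg hnum hpow.le, (div_le_one hpow).2 ?_⟩
  have := one_add_mul_le_pow (show (-2 : ℝ) ≤ r - 1 by linarith) n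
  rw [add_sub_cancel] at this
  linarith

theorem expFactor_le {r : ℝ} (hr : 1 ≤ r) : expFactor n a r ≤ exp |a| := by
  obtain ⟨hφ₀, hφ₁⟩ := ratio_mem_Icc n hr
  refine exp_le_exp.2 ?_
  calc -(((n : ℝ) * (r - 1) + 1) / r ^ n) * a
      ≤ |((n : ℝ) * (r - 1) + 1) / r ^ n * a| := by rw [neg_mul]; exact neg_le_abs _
    _ = ((n : ℝ) * (r - 1) + 1) / r ^ n * |a| := by rw [abs_mul, abs_of_nonneg hφ₀]
    _ ≤ |a| := mul_le_of_le_one_left (abs_nonneg a) hφ₁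

theorem continuousOn_expFactor : ContinuousOn (expFactor n a) (Ioi 0) :=
  continuous_exp.comp_continuousOn <|
    ((ContinuousOn.div (by fun_prop) (by fun_prop) fun r hr => pow_ne_zero n (ne_of_gt hr)).neg).mul
      continuousOn_const

theorem integrableOn_mul_expFactor {g : ℝ → ℝ} (hg : IntegrableOn g (Ioi 1)) :
    IntegrableOn (fun r => g r * expFactor n a r) (Ioi 1) :=
  hg.mul_bdd (c := exp |a|)
    (((continuousOn_expFactor n a).mono (Ioi_subset_Ioi zero_le_one)).aestronglyMeasurable
      measurableSet_Ioi) <| (ae_restrict_iff' measurableSet_Ioi).2 <| ae_of_all _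
      fun _ hr => (norm_of_nonneg (exp_pos _).le).trans_le (expFactor_le n a (le_of_lt hr))

theorem hasDerivAt_ratio {r : ℝ} (hr : r ≠ 0) :
    HasDerivAt (fun r : ℝ => ((n : ℝ) * (r - 1) + 1) / r ^ n)
      (-(((n : ℝ) ^ 2 - n) * (r - 1) * r ^ (-((n : ℤ) + 1)))) r := by
  have hfun : (fun r : ℝ => ((n : ℝ) * (r - 1) + 1) / r ^ n)
      = fun r => ((n : ℝ) * (r - 1) + 1) * r ^ (-(n : ℤ)) := by
    funext r
    rw [zpow_neg, zpow_natCast, div_eq_mul_inv]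
  rw [hfun]
  refine (((((hasDerivAt_id r).sub_const 1).const_mul (n : ℝ)).add_const 1).mul
    (hasDerivAt_zpow _ r (Or.inl hr))).congr_deriv ?_
  have hsucc : r ^ (-(n : ℤ)) = r * r ^ (-((n : ℤ) + 1)) := by
    rw [← zpow_one_add₀ hr]; ring_nf
  rw [hsucc, show -(n : ℤ) - 1 = -((n : ℤ) + 1) by ring, id]
  push_cast
  ring

theorem hasDerivAt_expFactor {r : ℝ} (hr : r ≠ 0) :
    HasDerivAt (expFactor n a)
      (expFactor n a r * (((n : ℝ) ^ 2 - n) * (r - 1) * a * r ^ (-((n : ℤ) + 1)))) r :=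
  ((hasDerivAt_ratio n hr).neg.mul_const a).exp.congr_deriv <| by
    simp only [expFactor, Pi.neg_apply]
    ring

theorem hasDerivAt_primitive {r : ℝ} (hr : r ≠ 0) :
    HasDerivAt (primitive n a) (leftIntegrand n a r - rightIntegrand n a r) r := by
  have h := (((hasDerivAt_id r).sub_const 1).mul (hasDerivAt_zpow (-((n : ℤ) + 1)) r
    (Or.inl hr))).mul (hasDerivAt_expFactor n a hr)
  refine h.congr_deriv ?_
  simp only [Pi.mul_apply, id]
  have hsucc : r ^ (-((n : ℤ) + 1)) = r * r ^ (-((n : ℤ) + 2)) := by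
    rw [← zpow_one_add₀ hr]; ring_nf
  have hsq : r ^ (-(2 * (n : ℤ) + 2)) = r ^ (-((n : ℤ) + 1)) * r ^ (-((n : ℤ) + 1)) := by
    rw [← zpow_add₀ hr]; ring_nf
  rw [leftIntegrand, rightIntegrand, hsq, show -((n : ℤ) + 1) - 1 = -((n : ℤ) + 2) by ring, hsucc]
  push_cast
  ring

theorem tendsto_primitive_atTop (hn : 1 ≤ n) : Tendsto (primitive n a) atTop (𝓝 0) := by
  have hdecay : Tendsto (fun r : ℝ => (r - 1) * r ^ (-((n : ℤ) + 1))) atTop (𝓝 0) := by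
    have h := (tendsto_zpow_atTop_zero (𝕜 := ℝ) (show -(n : ℤ) < 0 by omega)).sub
      (tendsto_zpow_atTop_zero (show -((n : ℤ) + 1) < 0 by omega))
    rw [sub_zero] at h
    refine h.congr' ((eventually_gt_atTop 0).mono fun r hr => ?_)
    rw [show -(n : ℤ) = 1 + -((n : ℤ) + 1) by ring, zpow_add₀ hr.ne', zpow_one]
    ring
  refine hdecay.zero_mul_isBoundedUnder_le <| isBoundedUnder_of_eventually_le (a := exp |a|) <|
    (eventually_ge_atTop 1).mono fun r hr => ?_
  exact (norm_of_nonneg (exp_pos _).le).trans_le (expFactor_le n a hr)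

end FirstTermIBP

open FirstTermIBP in
theorem su2_integration_by_parts_first_term_general (n : ℕ) (hn : 2 ≤ n) (a : ℝ) :
    ∫ r in Ioi (1 : ℝ),
        ((n : ℝ) ^ 2 - n) * (r - 1) ^ 2 * a * r ^ (-(2 * (n : ℤ) + 2)) *
          Real.exp (-(((n : ℝ) * (r - 1) + 1) / r ^ n) * a)
    = ∫ r in Ioi (1 : ℝ),
        ((n : ℝ) * r ^ (-((n : ℤ) + 1)) - ((n : ℝ) + 1) * r ^ (-((n : ℤ) + 2))) *
          Real.exp (-(((n : ℝ) * (r - 1) + 1) / r ^ n) * a) := by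
  have hL : IntegrableOn (leftIntegrand n a) (Ioi 1) := by
    have hcoeff := integrableOn_Ioi_sub_one_sq_mul_zpow (k := -(2 * (n : ℤ) + 2)) (by omega) one_pos
    exact integrableOn_mul_expFactor n a <| IntegrableOn.congr_fun
      (hcoeff.const_mul (((n : ℝ) ^ 2 - n) * a)) (fun r _ => by ring) measurableSet_Ioi
  have hR : IntegrableOn (rightIntegrand n a) (Ioi 1) :=
    integrableOn_mul_expFactor n a <|
      ((integrableOn_Ioi_zpow_of_lt (by omega) one_pos).const_mul _).sub
        ((integrableOn_Ioi_zpow_of_lt (by omega) one_pos).const_mul _)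
  have hFTC := integral_Ioi_of_hasDerivAt_of_tendsto'
    (fun r hr => hasDerivAt_primitive n a (ne_of_gt (one_pos.trans_le hr))) (hL.sub hR)
    (tendsto_primitive_atTop n a (by omega))
  rw [integral_sub hL hR, primitive, sub_self, zero_mul, zero_mul, sub_zero] at hFTC
  exact sub_eq_zero.mp hFTC

/-- The integration-by-parts identity for the first part of the integrand in (ttttt):
`∫₁^∞ (n²−n)(r−1)² a r^{−(2n+2)} e^{−((n(r−1)+1)/rⁿ)a} dr
  = ∫₁^∞ (n r^{−(n+1)} − (n+1) r^{−(n+2)}) e^{−((n(r−1)+1)/rⁿ)a} dr`. -/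
theorem su2_integration_by_parts_first_term (n : ℕ) (hn : 2 ≤ n) (a : ℝ) (ha : 0 ≤ a) :
    ∫ r in Ioi (1 : ℝ),
        ((n : ℝ) ^ 2 - n) * (r - 1) ^ 2 * a * r ^ (-(2 * (n : ℤ) + 2)) *
          Real.exp (-(((n : ℝ) * (r - 1) + 1) / r ^ n) * a)
    = ∫ r in Ioi (1 : ℝ),
        ((n : ℝ) * r ^ (-((n : ℤ) + 1)) - ((n : ℝ) + 1) * r ^ (-((n : ℤ) + 2))) *
          Real.exp (-(((n : ℝ) * (r - 1) + 1) / r ^ n) * a) :=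
  su2_integration_by_parts_first_term_general n hn a
end

section
/- For every real number a ≥ 0, the limit as n → ∞ of ∫₀¹ exp( −(n·t^(n−1) − (n−1)·tⁿ)·a ) dt equals 1. -/
/-!
Writing `yₙ(t) = n t^(n-1) (1 - t) + tⁿ` shows `yₙ ≥ 0` on `[0, 1]` and `yₙ(t) → 0` for `t < 1`.
Hence for `a ≥ 0` the integrand `e^{-yₙ(t) a}` lies in `(0, 1]` and tends to `1` off the null set
`{1}`, and dominated convergence with the constant bound `1` gives the limit `∫₀¹ 1 = 1`.
-/

open MeasureTheory Real Filter Set Topology Interval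

theorem tendsto_intervalIntegral_exp_neg_mul_of_tendsto_zero {ι : Type*} {l : Filter ι}
    [l.IsCountablyGenerated] {f : ι → ℝ → ℝ} {a : ℝ} (ha : 0 ≤ a) (hf : ∀ i, Measurable (f i))
    (hf_nonneg : ∀ i, ∀ t ∈ Ioc (0 : ℝ) 1, 0 ≤ f i t)
    (hf_lim : ∀ t ∈ Ioo (0 : ℝ) 1, Tendsto (f · t) l (𝓝 0)) :
    Tendsto (fun i => ∫ t in (0 : ℝ)..1, exp (-f i t * a)) l (𝓝 1) := by
  have hbound : ∀ i, ∀ t ∈ Ι (0 : ℝ) 1, ‖exp (-f i t * a)‖ ≤ 1 := by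
    intro i t ht
    rw [uIoc_of_le zero_le_one] at ht
    rw [norm_of_nonneg (exp_pos _).le, exp_le_one_iff, neg_mul, neg_nonpos]
    exact mul_nonneg (hf_nonneg i t ht) ha
  have hlim : ∀ᵐ t, t ∈ Ι (0 : ℝ) 1 → Tendsto (fun i => exp (-f i t * a)) l (𝓝 1) := by
    filter_upwards [compl_mem_ae_iff.mpr (measure_singleton (1 : ℝ))] with t (ht1 : t ≠ 1) ht
    rw [uIoc_of_le zero_le_one] at ht
    simpa using ((hf_lim t ⟨ht.1, ht.2.lt_of_ne ht1⟩).neg.mul_const a).rexp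
  simpa using intervalIntegral.tendsto_integral_filter_of_dominated_convergence (fun _ => 1)
    (.of_forall fun i => ((hf i).neg.mul_const a).exp.aestronglyMeasurable)
    (.of_forall fun i => .of_forall (hbound i)) intervalIntegrable_const hlim

theorem mul_pow_pred_sub_mul_pow_eq {n : ℕ} (hn : 1 ≤ n) (t : ℝ) :
    (n : ℝ) * t ^ (n - 1) - ((n : ℝ) - 1) * t ^ n = n * t ^ (n - 1) * (1 - t) + t ^ n := by
  obtain ⟨m, rfl⟩ := Nat.exists_eq_add_of_le' hn
  simp only [Nat.add_sub_cancel, pow_succ]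
  push_cast
  ring

theorem mul_pow_pred_sub_mul_pow_nonneg {t : ℝ} (ht0 : 0 ≤ t) (ht1 : t ≤ 1) (n : ℕ) :
    0 ≤ (n : ℝ) * t ^ (n - 1) - ((n : ℝ) - 1) * t ^ n := by
  rcases Nat.eq_zero_or_pos n with rfl | hn
  · norm_num
  · rw [mul_pow_pred_sub_mul_pow_eq hn]
    have := sub_nonneg.2 ht1
    positivity

theorem tendsto_mul_pow_pred_sub_mul_pow_zero {t : ℝ} (ht0 : 0 ≤ t) (ht1 : t < 1) :
    Tendsto (fun n : ℕ => (n : ℝ) * t ^ (n - 1) - ((n : ℝ) - 1) * t ^ n) atTop (𝓝 0) := by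
  have hpow := tendsto_pow_atTop_nhds_zero_of_lt_one ht0 ht1
  have hsucc : Tendsto (fun m : ℕ => ((m + 1 : ℕ) : ℝ) * t ^ m) atTop (𝓝 0) := by
    simpa [add_mul] using (tendsto_self_mul_const_pow_of_lt_one ht0 ht1).add hpow
  have hpred : Tendsto (fun n : ℕ => (n : ℝ) * t ^ (n - 1)) atTop (𝓝 0) := by
    refine (hsucc.comp (tendsto_sub_atTop_nat 1)).congr' ?_
    filter_upwards [eventually_ge_atTop 1] with n hn
    simp only [Function.comp_apply, Nat.sub_add_cancel hn]
  have := (hpred.mul_const (1 - t)).add hpow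
  rw [zero_mul, zero_add] at this
  refine this.congr' ?_
  filter_upwards [eventually_ge_atTop 1] with n hn
  rw [mul_pow_pred_sub_mul_pow_eq hn]

/-- The key limit in the proof of Theorem 1.1: for `a ≥ 0`,
`gₙ(a) = ∫₀¹ e^{−yₙ(t)a} dt → 1` as `n → ∞`, where `yₙ(t) = n t^(n−1) − (n−1) tⁿ`. -/
theorem su2_g_n_tendsto_one (a : ℝ) (ha : 0 ≤ a) :
    Tendsto
      (fun n : ℕ =>
        ∫ t in (0:ℝ)..1,
          Real.exp (-((n : ℝ) * t ^ (n - 1) - ((n : ℝ) - 1) * t ^ n) * a))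
      atTop (nhds 1) := by
  exact tendsto_intervalIntegral_exp_neg_mul_of_tendsto_zero ha (fun n => by fun_prop)
    (fun n t ht => mul_pow_pred_sub_mul_pow_nonneg ht.1.le ht.2 n)
    (fun t ht => tendsto_mul_pow_pred_sub_mul_pow_zero ht.1.le ht.2)
end

section
/- Let n ≥ 1 be an integer. For every s ∈ [0,1], one has −n·s^((n−1)/n) + (n−1)·s ≤ −(n+1)·s^(n/(n+1)) + n·s; that is, the sequence zₙ(s) := −n·s^((n−1)/n) + (n−1)·s is monotone nondecreasing in n for each fixed s ∈ [0,1]. -/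
/-!
Since `n/(n+1) · (n-1)/n + 1/(n+1) · 1 = n/(n+1)`, the weighted AM–GM inequality for `s^((n-1)/n)`
and `s` with weights `n/(n+1)` and `1/(n+1)` gives `(n+1) s^(n/(n+1)) ≤ n s^((n-1)/n) + s`,
which is the claim after rearranging.
-/

open Set Real

theorem Real.rpow_weighted_mean_le {s w₁ w₂ p q : ℝ} (hs : 0 ≤ s) (hw₁ : 0 ≤ w₁) (hw₂ : 0 ≤ w₂)
    (hw : w₁ + w₂ = 1) (hexp : w₁ * p + w₂ * q ≠ 0) :
    s ^ (w₁ * p + w₂ * q) ≤ w₁ * s ^ p + w₂ * s ^ q := by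
  have hgm := geom_mean_le_arith_mean2_weighted hw₁ hw₂ (rpow_nonneg hs p) (rpow_nonneg hs q) hw
  rwa [← rpow_mul hs, ← rpow_mul hs, ← rpow_add' hs (by rwa [mul_comm p, mul_comm q]),
    mul_comm p, mul_comm q] at hgm

/-- Monotonicity in `n` of `zₙ(s) = −n s^((n−1)/n) + (n−1)s` for `s ∈ [0,1]`:
`zₙ(s) ≤ z_{n+1}(s)`. -/
theorem su2_z_n_monotone (n : ℕ) (hn : 1 ≤ n) (s : ℝ) (hs : s ∈ Icc (0:ℝ) 1) :
    -(n : ℝ) * s ^ (((n : ℝ) - 1) / n) + ((n : ℝ) - 1) * s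
      ≤ -((n : ℝ) + 1) * s ^ ((n : ℝ) / ((n : ℝ) + 1)) + (n : ℝ) * s := by
  have hn₀ : (0 : ℝ) < n := by exact_mod_cast hn
  have hexp : (n : ℝ) / (n + 1) * ((n - 1) / n) + 1 / (n + 1) * 1 = n / (n + 1) := by
    field_simp
    ring
  have hmean := rpow_weighted_mean_le (w₁ := n / (n + 1)) (w₂ := 1 / (n + 1))
    (p := ((n : ℝ) - 1) / n) (q := 1) hs.1 (by positivity) (by positivity) (by field_simp)
    (by rw [hexp]; positivity)
  rw [hexp, rpow_one] at hmean
  have hscaled : ((n : ℝ) + 1) * s ^ ((n : ℝ) / (n + 1)) ≤ n * s ^ (((n : ℝ) - 1) / n) + s := by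
    calc ((n : ℝ) + 1) * s ^ ((n : ℝ) / (n + 1))
        ≤ (n + 1) * (n / (n + 1) * s ^ (((n : ℝ) - 1) / n) + 1 / (n + 1) * s) := by gcongr
      _ = n * s ^ (((n : ℝ) - 1) / n) + s := by field_simp
  linarith
end

section
/- For every real number a ≥ 0, the limit as n → ∞ of ∫₀¹ exp( (−n·s^((n−1)/n) + (n−1)·s)·a ) ds equals ∫₀¹ exp( −(s − s·log s)·a ) ds. Equivalently, with yₙ(t) := n·t^(n−1) − (n−1)·tⁿ, lim_{n→∞} n·∫₀¹ t^(n−1) exp(−yₙ(t)·a) dt = ∫₀¹ exp(−(s − s·log s)·a) ds. -/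
/-!
The substitution `s = tⁿ` turns the second integral into the first. For the first, write
`zₙ(s) = -s · n (s^(-1/n) - 1) - s`; since `n (x^(1/n) - 1) → log x`, this tends to `s log s - s`
pointwise on `(0, 1]`. On `[0, 1]` we have `s ≤ s^((n-1)/n)`, so `zₙ ≤ 0` and, as `a ≥ 0`, the
integrands `exp (zₙ(s) a)` are bounded by `1`; dominated convergence concludes.
-/

open MeasureTheory Real Filter Set Topology

noncomputable def zSeq (n : ℕ) (s : ℝ) : ℝ :=
  -(n : ℝ) * s ^ (((n : ℝ) - 1) / n) + ((n : ℝ) - 1) * s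

lemma tendsto_nat_mul_rpow_inv_sub_one {x : ℝ} (hx : 0 < x) :
    Tendsto (fun n : ℕ => (n : ℝ) * (x ^ (n : ℝ)⁻¹ - 1)) atTop (𝓝 (log x)) := by
  simpa only [Function.comp_def, inv_inv] using
    (tendsto_rpow_sub_one_log hx).comp
      (tendsto_inv_atTop_nhdsGT_zero.comp tendsto_natCast_atTop_atTop)

lemma sub_one_div_self_nonneg (n : ℕ) : 0 ≤ ((n : ℝ) - 1) / n := by
  rcases n.eq_zero_or_pos with rfl | hn
  · simp
  · exact div_nonneg (by simpa [Nat.one_le_iff_ne_zero] using hn.ne') n.cast_nonneg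

lemma sub_one_div_self_le_one (n : ℕ) : ((n : ℝ) - 1) / n ≤ 1 :=
  div_le_one_of_le₀ (by linarith) n.cast_nonneg

lemma continuous_zSeq (n : ℕ) : Continuous (zSeq n) := by
  unfold zSeq
  have := Real.continuous_rpow_const (sub_one_div_self_nonneg n)
  fun_prop

lemma zSeq_nonpos (n : ℕ) {s : ℝ} (hs₀ : 0 ≤ s) (hs₁ : s ≤ 1) : zSeq n s ≤ 0 := by
  have hle : s ≤ s ^ (((n : ℝ) - 1) / n) :=
    self_le_rpow_of_le_one hs₀ hs₁ (sub_one_div_self_le_one n)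
  have := mul_le_mul_of_nonneg_left hle n.cast_nonneg
  unfold zSeq
  linarith

lemma zSeq_eq {n : ℕ} (hn : n ≠ 0) {s : ℝ} (hs : 0 < s) :
    zSeq n s = -s * ((n : ℝ) * (s⁻¹ ^ (n : ℝ)⁻¹ - 1)) - s := by
  have hn' : (n : ℝ) ≠ 0 := Nat.cast_ne_zero.mpr hn
  have hexp : ((n : ℝ) - 1) / n = 1 - (n : ℝ)⁻¹ := by field_simp
  rw [zSeq, hexp, rpow_sub hs, rpow_one, inv_rpow hs.le]
  field_simp
  ring

lemma tendsto_zSeq {s : ℝ} (hs : 0 < s) :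
    Tendsto (fun n => zSeq n s) atTop (𝓝 (-(s - s * log s))) := by
  have hlim := ((tendsto_nat_mul_rpow_inv_sub_one (inv_pos.mpr hs)).const_mul (-s)).sub_const s
  rw [log_inv, show -s * -log s - s = -(s - s * log s) by ring] at hlim
  refine hlim.congr' ?_
  filter_upwards [eventually_ne_atTop 0] with n hn
  rw [zSeq_eq hn hs]

lemma pow_rpow_sub_one_div_self {n : ℕ} (hn : n ≠ 0) {t : ℝ} (ht : 0 ≤ t) :
    (t ^ n) ^ (((n : ℝ) - 1) / n) = t ^ (n - 1) := by
  rw [← rpow_natCast_mul ht, ← rpow_natCast]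
  congr 1
  push_cast [Nat.one_le_iff_ne_zero.mpr hn]
  field_simp

lemma integral_nat_mul_pow_mul_comp_pow {g : ℝ → ℝ} (hg : Continuous g) {n : ℕ}
    (hn : n ≠ 0) :
    (n : ℝ) * ∫ t in (0 : ℝ)..1, t ^ (n - 1) * g (t ^ n) = ∫ s in (0 : ℝ)..1, g s := by
  have hsubst := intervalIntegral.integral_comp_mul_deriv (a := 0) (b := 1)
    (fun x _ => hasDerivAt_pow n x) (by fun_prop) hg
  rw [zero_pow hn, one_pow] at hsubst
  rw [← hsubst, ← intervalIntegral.integral_const_mul]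
  congr 1 with t
  simp only [Function.comp_apply]
  ring

lemma continuous_exp_zSeq_mul (n : ℕ) (a : ℝ) : Continuous fun s => exp (zSeq n s * a) :=
  continuous_exp.comp ((continuous_zSeq n).mul continuous_const)

lemma integral_nat_mul_pow_mul_exp_eq_integral_exp_zSeq {n : ℕ} (hn : n ≠ 0) (a : ℝ) :
    (n : ℝ) * ∫ t in (0 : ℝ)..1,
        t ^ (n - 1) * exp (-((n : ℝ) * t ^ (n - 1) - ((n : ℝ) - 1) * t ^ n) * a) =
      ∫ s in (0 : ℝ)..1, exp (zSeq n s * a) := by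
  rw [← integral_nat_mul_pow_mul_comp_pow (continuous_exp_zSeq_mul n a) hn]
  congr 1
  refine intervalIntegral.integral_congr fun t ht => ?_
  rw [uIcc_of_le zero_le_one] at ht
  simp only [zSeq, pow_rpow_sub_one_div_self hn ht.1]
  ring_nf

lemma tendsto_integral_exp_zSeq_mul {a : ℝ} (ha : 0 ≤ a) :
    Tendsto (fun n => ∫ s in (0 : ℝ)..1, exp (zSeq n s * a)) atTop
      (𝓝 (∫ s in (0 : ℝ)..1, exp (-(s - s * log s) * a))) := by
  refine intervalIntegral.tendsto_integral_filter_of_dominated_convergence (fun _ => 1)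
    (.of_forall fun n => ?_) (.of_forall fun n => .of_forall fun s hs => ?_)
    intervalIntegrable_const (.of_forall fun s hs => ?_)
  · exact (continuous_exp_zSeq_mul n a).aestronglyMeasurable
  · rw [uIoc_of_le zero_le_one] at hs
    rw [norm_of_nonneg (exp_pos _).le, exp_le_one_iff]
    exact mul_nonpos_of_nonpos_of_nonneg (zSeq_nonpos n hs.1.le hs.2) ha
  · rw [uIoc_of_le zero_le_one] at hs
    exact (continuous_exp.tendsto _).comp ((tendsto_zSeq hs.1).mul_const a)

/-- The limit of `hₙ(a)` in the proof of Theorem 1.1: for `a ≥ 0`,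
`∫₀¹ e^{zₙ(s)a} ds → ∫₀¹ e^{−(s − s log s)a} ds` where `zₙ(s) = −n s^((n−1)/n) + (n−1)s`;
equivalently, `n ∫₀¹ t^(n−1) e^{−yₙ(t)a} dt → ∫₀¹ e^{−(s − s log s)a} ds`
where `yₙ(t) = n t^(n−1) − (n−1) tⁿ`. -/
theorem su2_h_n_tendsto (a : ℝ) (ha : 0 ≤ a) :
    Tendsto
      (fun n : ℕ =>
        ∫ s in (0:ℝ)..1,
          Real.exp ((-(n : ℝ) * s ^ (((n : ℝ) - 1) / n) + ((n : ℝ) - 1) * s) * a))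
      atTop (nhds (∫ s in (0:ℝ)..1, Real.exp (-(s - s * Real.log s) * a)))
    ∧
    Tendsto
      (fun n : ℕ =>
        (n : ℝ) *
          ∫ t in (0:ℝ)..1,
            t ^ (n - 1) *
              Real.exp (-((n : ℝ) * t ^ (n - 1) - ((n : ℝ) - 1) * t ^ n) * a))
      atTop (nhds (∫ s in (0:ℝ)..1, Real.exp (-(s - s * Real.log s) * a))) := by
  refine ⟨tendsto_integral_exp_zSeq_mul ha, (tendsto_integral_exp_zSeq_mul ha).congr' ?_⟩
  filter_upwards [eventually_ne_atTop 0] with n hn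
  exact (integral_nat_mul_pow_mul_exp_eq_integral_exp_zSeq hn a).symm
end

section
/- Let n ≥ 2 be an integer and z, x, ξ ∈ ℂ. Let Δ_z be the 3×3 complex matrix (1+|z|²)ⁿ · M, where M has rows ( 1, n z̄/(1+|z|²), n(n−1) z̄²/(1+|z|²)² ), ( n z/(1+|z|²), (n + n²|z|²)/(1+|z|²)², (2n(n−1)z̄ + (n−1)n² z̄ |z|²)/(1+|z|²)³ ), and ( n(n−1) z²/(1+|z|²)², (2n(n−1)z + (n−1)n² z |z|²)/(1+|z|²)³, (2n(n−1) + 4n(n−1)²|z|² + n²(n−1)²|z|⁴)/(1+|z|²)⁴ ). Then Δ_z is invertible and the scalar (x, 0, ξ) · Δ_z^{-1} · (x̄, 0, ξ̄)ᵀ equals (1/(2(1+|z|²)ⁿ)) · ( | √(n²−n)·z̄²·x + (1/√(n²−n))·(1+|z|²)²·ξ |² + 2(n|z|²+1)·|x|² ). -/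
open Matrix Complex

/-!
With `w = 1 + |z|²` and `ζ = z / w`, the covariance matrix has the `LDLᴴ` factorization
`Δ_z = L(ζ) D L(ζ)ᴴ` with pivots `D = diag(wⁿ, n wⁿ⁻², 2n(n-1) wⁿ⁻⁴)`, where `L(ζ) = exp(ζX)`
for the nilpotent `X` with subdiagonal `(n, 2(n-1))`. Being a one-parameter group, `L(ζ)⁻¹ = L(-ζ)`, so
`Δ_z⁻¹ = L(-ζ)ᴴ D⁻¹ L(-ζ)` and `Q_z(x, ξ) = ∑ₖ |(L(-ζ) (x̄, 0, ξ̄))ₖ|² / dₖ`. The first two squares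
add up to `(1 + n|z|²)|x|² / wⁿ`; the third is the square in the claimed formula, after writing
`n(n-1) = (√(n²-n))²`.
-/

section LDL

variable {𝕜 ι : Type*} [RCLike 𝕜] [Fintype ι] [DecidableEq ι]

theorem Matrix.mul_diagonal_mul_conjTranspose_left_inv {L N : Matrix ι ι 𝕜} (hNL : N * L = 1)
    {d : ι → ℝ} (hd : ∀ i, d i ≠ 0) :
    (Nᴴ * diagonal (fun i ↦ ((d i)⁻¹ : 𝕜)) * N) * (L * diagonal (fun i ↦ (d i : 𝕜)) * Lᴴ) = 1 := by
  have hdd : diagonal (fun i ↦ ((d i)⁻¹ : 𝕜)) * diagonal (fun i ↦ (d i : 𝕜)) = 1 := by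
    rw [diagonal_mul_diagonal, ← diagonal_one]
    congr 1
    ext i
    exact inv_mul_cancel₀ (by exact_mod_cast hd i)
  calc _ = Nᴴ * (diagonal (fun i ↦ ((d i)⁻¹ : 𝕜)) * ((N * L) * diagonal (fun i ↦ (d i : 𝕜))))
        * Lᴴ := by simp only [Matrix.mul_assoc]
    _ = (L * N)ᴴ := by rw [hNL, Matrix.one_mul, hdd, Matrix.mul_one, conjTranspose_mul]
    _ = 1 := by rw [mul_eq_one_comm.mp hNL, conjTranspose_one]

theorem Matrix.dotProduct_inv_mul_diagonal_mul_conjTranspose_mulVec_star {L N : Matrix ι ι 𝕜}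
    (hNL : N * L = 1) {d : ι → ℝ} (hd : ∀ i, d i ≠ 0) (v : ι → 𝕜) :
    v ⬝ᵥ ((L * diagonal (fun i ↦ (d i : 𝕜)) * Lᴴ)⁻¹ *ᵥ star v)
      = ((∑ i, ‖(N *ᵥ star v) i‖ ^ 2 / d i : ℝ) : 𝕜) := by
  rw [inv_eq_left_inv (mul_diagonal_mul_conjTranspose_left_inv hNL hd), ← mulVec_mulVec,
    ← mulVec_mulVec, dotProduct_mulVec, ← star_star v, ← star_mulVec, star_star]
  simp only [dotProduct, mulVec_diagonal, Pi.star_apply]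
  push_cast
  refine Finset.sum_congr rfl fun i _ ↦ ?_
  rw [← RCLike.conj_mul, RCLike.star_def]
  ring

end LDL

section Factor

variable {R : Type*} [CommRing R]

def su2CovFactor (n : ℕ) (ζ : R) : Matrix (Fin 3) (Fin 3) R :=
  !![1, 0, 0;
    n * ζ, 1, 0;
    n * (n - 1) * ζ ^ 2, 2 * (n - 1) * ζ, 1]

theorem su2CovFactor_add (n : ℕ) (ζ η : R) :
    su2CovFactor n (ζ + η) = su2CovFactor n ζ * su2CovFactor n η := by
  ext i j
  fin_cases i <;> fin_cases j <;> simp [su2CovFactor, mul_apply, Fin.sum_univ_three] <;> ring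

theorem su2CovFactor_zero (n : ℕ) : su2CovFactor n (0 : R) = 1 := by
  ext i j
  fin_cases i <;> fin_cases j <;> simp [su2CovFactor, one_apply]

theorem su2CovFactor_neg_mul (n : ℕ) (ζ : R) : su2CovFactor n (-ζ) * su2CovFactor n ζ = 1 := by
  rw [← su2CovFactor_add, neg_add_cancel, su2CovFactor_zero]

theorem su2CovFactor_neg_mulVec (n : ℕ) (ζ a b : R) :
    su2CovFactor n (-ζ) *ᵥ ![a, 0, b] = ![a, -(n * ζ * a), n * (n - 1) * ζ ^ 2 * a + b] := by
  ext i
  fin_cases i <;> simp [su2CovFactor, mulVec, dotProduct, Fin.sum_univ_three]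

end Factor

noncomputable def su2CovPivots (n : ℕ) (w : ℝ) : Fin 3 → ℝ :=
  ![w ^ n, n * w ^ n / w ^ 2, 2 * n * (n - 1) * w ^ n / w ^ 4]

theorem su2CovPivots_ne_zero {n : ℕ} (hn : 2 ≤ n) {w : ℝ} (hw : w ≠ 0) (i : Fin 3) :
    su2CovPivots n w i ≠ 0 := by
  have hn0 : (n : ℝ) ≠ 0 := by positivity
  have hn1 : (n : ℝ) - 1 ≠ 0 := sub_ne_zero.mpr (by exact_mod_cast (by omega : n ≠ 1))
  fin_cases i <;> simp [su2CovPivots, hw, hn0, hn1]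

noncomputable def su2Covariance (n : ℕ) (z : ℂ) : Matrix (Fin 3) (Fin 3) ℂ :=
  (((1 + ‖z‖ ^ 2 : ℝ) : ℂ) ^ n) •
    !![(1 : ℂ),
        (n : ℂ) * (starRingEnd ℂ z) / ((1 : ℂ) + (‖z‖ : ℂ) ^ 2),
        (n : ℂ) * ((n : ℂ) - 1) * (starRingEnd ℂ z) ^ 2
          / ((1 : ℂ) + (‖z‖ : ℂ) ^ 2) ^ 2;
      (n : ℂ) * z / ((1 : ℂ) + (‖z‖ : ℂ) ^ 2),
        ((n : ℂ) + (n : ℂ) ^ 2 * (‖z‖ : ℂ) ^ 2)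
          / ((1 : ℂ) + (‖z‖ : ℂ) ^ 2) ^ 2,
        (2 * (n : ℂ) * ((n : ℂ) - 1) * (starRingEnd ℂ z)
            + ((n : ℂ) - 1) * (n : ℂ) ^ 2 * (starRingEnd ℂ z) * (‖z‖ : ℂ) ^ 2)
          / ((1 : ℂ) + (‖z‖ : ℂ) ^ 2) ^ 3;
      (n : ℂ) * ((n : ℂ) - 1) * z ^ 2 / ((1 : ℂ) + (‖z‖ : ℂ) ^ 2) ^ 2,
        (2 * (n : ℂ) * ((n : ℂ) - 1) * z
            + ((n : ℂ) - 1) * (n : ℂ) ^ 2 * z * (‖z‖ : ℂ) ^ 2)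
          / ((1 : ℂ) + (‖z‖ : ℂ) ^ 2) ^ 3,
        (2 * (n : ℂ) * ((n : ℂ) - 1) + 4 * (n : ℂ) * ((n : ℂ) - 1) ^ 2 * (‖z‖ : ℂ) ^ 2
            + (n : ℂ) ^ 2 * ((n : ℂ) - 1) ^ 2 * (‖z‖ : ℂ) ^ 4)
          / ((1 : ℂ) + (‖z‖ : ℂ) ^ 2) ^ 4]

theorem su2Covariance_eq (n : ℕ) (z : ℂ) :
    su2Covariance n z = su2CovFactor n (z / (1 + ‖z‖ ^ 2 : ℝ))
      * diagonal (fun i ↦ (su2CovPivots n (1 + ‖z‖ ^ 2) i : ℂ))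
      * (su2CovFactor n (z / (1 + ‖z‖ ^ 2 : ℝ)))ᴴ := by
  have hz : (‖z‖ : ℂ) ^ 2 = z * starRingEnd ℂ z := (mul_conj' z).symm
  have hw : (1 : ℂ) + z * starRingEnd ℂ z ≠ 0 := by
    rw [← hz]; exact_mod_cast (by positivity : (0 : ℝ) < 1 + ‖z‖ ^ 2).ne'
  rw [su2Covariance, show (‖z‖ : ℂ) ^ 4 = ((‖z‖ : ℂ) ^ 2) ^ 2 by ring]
  ext i j
  simp only [mul_apply, Fin.sum_univ_three, conjTranspose_apply]
  fin_cases i <;> fin_cases j <;>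
    simp [su2CovFactor, su2CovPivots, hz, hw] <;>
    field_simp <;> ring

theorem sum_norm_sq_su2CovFactor_neg_mulVec_div_su2CovPivots {n : ℕ} (hn : 2 ≤ n) (z x ξ : ℂ) :
    ∑ i, ‖(su2CovFactor n (-(z / (1 + ‖z‖ ^ 2 : ℝ)))
          *ᵥ ![starRingEnd ℂ x, 0, starRingEnd ℂ ξ]) i‖ ^ 2 / su2CovPivots n (1 + ‖z‖ ^ 2) i
      = (1 / (2 * (1 + ‖z‖ ^ 2) ^ n)) *
            (‖(Real.sqrt ((n : ℝ) ^ 2 - n) : ℂ) * (starRingEnd ℂ z) ^ 2 * x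
                + (1 / (Real.sqrt ((n : ℝ) ^ 2 - n) : ℂ))
                  * ((1 + ‖z‖ ^ 2 : ℝ) : ℂ) ^ 2 * ξ‖ ^ 2
              + 2 * ((n : ℝ) * ‖z‖ ^ 2 + 1) * ‖x‖ ^ 2) := by
  set w : ℝ := 1 + ‖z‖ ^ 2
  set s : ℝ := Real.sqrt ((n : ℝ) ^ 2 - n) with hs_def
  set u : ℂ := n * (n - 1) * (z / w) ^ 2 * starRingEnd ℂ x + starRingEnd ℂ ξ with hu
  have hw : 0 < w := by positivity
  have hn1 : (1 : ℝ) < n := by exact_mod_cast hn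
  have hs2 : s ^ 2 = n * (n - 1) := by
    rw [hs_def, Real.sq_sqrt (by nlinarith)]; ring
  have hs : 0 < s := Real.sqrt_pos.mpr (by nlinarith)
  have hnorm_u : ‖(s : ℂ) * starRingEnd ℂ z ^ 2 * x + 1 / (s : ℂ) * (w : ℂ) ^ 2 * ξ‖
      = w ^ 2 / s * ‖u‖ := by
    have hsC : (s : ℂ) ^ 2 = n * (n - 1) := by exact_mod_cast hs2
    have hs0 : (s : ℂ) ≠ 0 := by exact_mod_cast hs.ne'
    have hw0 : (w : ℂ) ≠ 0 := by exact_mod_cast hw.ne'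
    have hconj : (s : ℂ) * starRingEnd ℂ z ^ 2 * x + 1 / (s : ℂ) * (w : ℂ) ^ 2 * ξ
        = ((w ^ 2 / s : ℝ) : ℂ) * starRingEnd ℂ u := by
      simp only [hu, one_div, ofReal_div, ofReal_pow, map_add, map_mul, map_natCast, map_sub,
        map_one, map_pow, map_div₀, conj_ofReal, RingHomCompTriple.comp_apply, RingHom.id_apply]
      field_simp [hs0, hw0]
      linear_combination (starRingEnd ℂ z) ^ 2 * x * hsC
    rw [hconj, norm_mul, Complex.norm_conj, Complex.norm_real, Real.norm_of_nonneg (by positivity)]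
  have hnorm_x : ‖-(n * (z / w) * starRingEnd ℂ x)‖ = n * ‖z‖ / w * ‖x‖ := by
    rw [norm_neg, norm_mul, norm_mul, norm_div, Complex.norm_natCast, Complex.norm_real,
      Real.norm_of_nonneg hw.le, Complex.norm_conj]
    ring
  rw [hnorm_u, Fin.sum_univ_three, su2CovFactor_neg_mulVec]
  simp only [su2CovPivots, cons_val_zero, cons_val_one, cons_val_two, head_cons, tail_cons,
    Complex.norm_conj, hnorm_x, ← hu]
  have hn0 : (n : ℝ) ≠ 0 := by positivity
  have hn1' : (n : ℝ) - 1 ≠ 0 := by linarith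
  field_simp [hn0, hn1']
  rw [hs2]
  ring

/-- The diagonalization (vv) of the quadratic form `Q_z(x,ξ) = ⟨(x,0,ξ), Δ_z⁻¹(x̄,0,ξ̄)⟩`:
`Δ_z` is invertible and the quadratic form equals
`(1/(2(1+|z|²)ⁿ)) (|√(n²−n) z̄² x + (1/√(n²−n))(1+|z|²)² ξ|² + 2(n|z|²+1)|x|²)`. -/
theorem su2_covariance_quadratic_form (n : ℕ) (hn : 2 ≤ n) (z x ξ : ℂ) :
    let Δ : Matrix (Fin 3) (Fin 3) ℂ :=
      (((1 + ‖z‖ ^ 2 : ℝ) : ℂ) ^ n) •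
        !![(1 : ℂ),
            (n : ℂ) * (starRingEnd ℂ z) / ((1 : ℂ) + (‖z‖ : ℂ) ^ 2),
            (n : ℂ) * ((n : ℂ) - 1) * (starRingEnd ℂ z) ^ 2
              / ((1 : ℂ) + (‖z‖ : ℂ) ^ 2) ^ 2;
          (n : ℂ) * z / ((1 : ℂ) + (‖z‖ : ℂ) ^ 2),
            ((n : ℂ) + (n : ℂ) ^ 2 * (‖z‖ : ℂ) ^ 2)
              / ((1 : ℂ) + (‖z‖ : ℂ) ^ 2) ^ 2,
            (2 * (n : ℂ) * ((n : ℂ) - 1) * (starRingEnd ℂ z)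
                + ((n : ℂ) - 1) * (n : ℂ) ^ 2 * (starRingEnd ℂ z) * (‖z‖ : ℂ) ^ 2)
              / ((1 : ℂ) + (‖z‖ : ℂ) ^ 2) ^ 3;
          (n : ℂ) * ((n : ℂ) - 1) * z ^ 2 / ((1 : ℂ) + (‖z‖ : ℂ) ^ 2) ^ 2,
            (2 * (n : ℂ) * ((n : ℂ) - 1) * z
                + ((n : ℂ) - 1) * (n : ℂ) ^ 2 * z * (‖z‖ : ℂ) ^ 2)
              / ((1 : ℂ) + (‖z‖ : ℂ) ^ 2) ^ 3,
            (2 * (n : ℂ) * ((n : ℂ) - 1) + 4 * (n : ℂ) * ((n : ℂ) - 1) ^ 2 * (‖z‖ : ℂ) ^ 2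
                + (n : ℂ) ^ 2 * ((n : ℂ) - 1) ^ 2 * (‖z‖ : ℂ) ^ 4)
              / ((1 : ℂ) + (‖z‖ : ℂ) ^ 2) ^ 4]
    IsUnit Δ.det ∧
      (dotProduct ![x, 0, ξ] (Δ⁻¹.mulVec ![starRingEnd ℂ x, 0, starRingEnd ℂ ξ]))
        = (((1 / (2 * (1 + ‖z‖ ^ 2) ^ n)) *
            (‖(Real.sqrt ((n : ℝ) ^ 2 - n) : ℂ) * (starRingEnd ℂ z) ^ 2 * x
                + (1 / (Real.sqrt ((n : ℝ) ^ 2 - n) : ℂ))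
                  * ((1 + ‖z‖ ^ 2 : ℝ) : ℂ) ^ 2 * ξ‖ ^ 2
              + 2 * ((n : ℝ) * ‖z‖ ^ 2 + 1) * ‖x‖ ^ 2) : ℝ) : ℂ) := by
  intro Δ
  have hΔ : Δ = _ := su2Covariance_eq n z
  have hNL := su2CovFactor_neg_mul n (z / (1 + ‖z‖ ^ 2 : ℝ))
  have hd := su2CovPivots_ne_zero hn (by positivity : 1 + ‖z‖ ^ 2 ≠ 0)
  have hv : ![starRingEnd ℂ x, 0, starRingEnd ℂ ξ] = star ![x, 0, ξ] := by
    ext i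
    fin_cases i <;> simp
  refine ⟨hΔ ▸ isUnit_det_of_left_inverse (mul_diagonal_mul_conjTranspose_left_inv hNL hd), ?_⟩
  rw [hΔ, hv]
  refine (dotProduct_inv_mul_diagonal_mul_conjTranspose_mulVec_star hNL hd _).trans ?_
  rw [← hv, sum_norm_sq_su2CovFactor_neg_mulVec_div_su2CovPivots hn]
  -- the coercion `ℝ → 𝕜` at `𝕜 = ℂ` agrees with `Complex.ofReal` only up to unfolding
  rfl
end
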